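/- arXiv:1305.4888 — 2 statements merged into one kernel-verified Lean document; each statement's English description precedes it below -/
import Mathlib

section
/- Let ω ⊆ ℝ² be a bounded open set, M > 0 and 0 < α < 1. Let q̃ : ℝ² × ℝ → ℝ be continuous with |q̃(z)| ≤ 2M for all z ∈ cl(ω) × ℝ and |q̃(z) − q̃(w)| ≤ 2M·‖z − w‖^α for all z, w ∈ cl(ω) × ℝ, and let q : ℝ² × ℝ → ℝ be equal to q̃ on cl(ω) × ℝ and equal to 0 outside cl(ω) × ℝ. Assume there is a constant C_ω > 0 such that the 2-dimensional Lebesgue measure of {x' ∈ ℝ² : dist(x', ∂ω) ≤ s} is at most C_ω·s for every s ∈ (0,1]. Then there exists a constant C > 0, depending only on ω, M, α, C_ω, φ and h, such that for every δ ∈ (0,1) and every y₃ ∈ ℝ one has (∫_{ℝ²} |R_δ[q](y',y₃) − q(y',y₃)|² dy')^{1/2} ≤ C·δ^{min(α,1/2)}. -/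
/-!
`Rdel φ h q δ · y3` averages `q` against the probability density `Phid² · hdel²`, which is
supported in the cylinder `closedBall y' δ × [y3 - δ, y3 + δ]`, so `|Rdel q - q|` at `y'` is
bounded by the oscillation of `q` over that cylinder. Within distance `δ` of `∂ω`, a set of
measure at most `Cω δ`, the oscillation is at most `4M`. Elsewhere the ball is connected and
misses `∂ω`, so it lies either inside `cl ω`, where Hölder continuity bounds the oscillation by
`4M δ^α`, or outside it, where `q` vanishes. Integrating the square over `y'` gives
`16M² (Cω δ + |cl ω| δ^(2α))`, which is `O(δ^(2 min(α, 1/2)))`.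
-/

open MeasureTheory Metric Set

noncomputable def Phid (φ : EuclideanSpace ℝ (Fin 2) → ℝ) (δ : ℝ)
    (x' y' : EuclideanSpace ℝ (Fin 2)) : ℝ := δ⁻¹ * φ (δ⁻¹ • (x' - y'))

noncomputable def hdel (h : ℝ → ℝ) (δ x3 y3 : ℝ) : ℝ :=
  δ ^ (-(1 / 2) : ℝ) * h ((x3 - y3) / δ)

noncomputable def Rdel (φ : EuclideanSpace ℝ (Fin 2) → ℝ) (h : ℝ → ℝ)
    (q : EuclideanSpace ℝ (Fin 2) → ℝ → ℝ) (δ : ℝ)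
    (y' : EuclideanSpace ℝ (Fin 2)) (y3 : ℝ) : ℝ :=
  ∫ x3 : ℝ, ∫ x' : EuclideanSpace ℝ (Fin 2),
    (Phid φ δ x' y') ^ 2 * (hdel h δ x3 y3) ^ 2 * q x' x3

theorem IsPreconnected.subset_of_disjoint_frontier {X : Type*} [TopologicalSpace X]
    {s t : Set X} (ht : IsPreconnected t) (hne : (t ∩ s).Nonempty)
    (hd : Disjoint t (frontier s)) : t ⊆ s := by
  have key : ∀ x ∈ t, x ∈ closure s → x ∈ interior s := fun x hxt hxs =>
    ((closure_eq_interior_union_frontier s ▸ hxs).resolve_right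
      (hd.notMem_of_mem_left hxt))
  obtain ⟨a, hat, has⟩ := hne
  refine (ht.subset_of_closure_inter_subset isOpen_interior
    ⟨a, hat, key a hat (subset_closure has)⟩ ?_).trans interior_subset
  exact fun x ⟨hxc, hxt⟩ => key x hxt (closure_mono interior_subset hxc)

theorem abs_integral_mul_sub_le {X : Type*} [MeasurableSpace X] {μ : Measure X}
    {ρ f : X → ℝ} {c B : ℝ} (hρ0 : ∀ x, 0 ≤ ρ x) (hρ1 : ∫ x, ρ x ∂μ = 1)
    (hf : AEStronglyMeasurable f μ) (hfB : ∀ x, ρ x ≠ 0 → |f x - c| ≤ B) :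
    |∫ x, ρ x * f x ∂μ - c| ≤ B := by
  have hρ : Integrable ρ μ := .of_integral_ne_zero (by simp [hρ1])
  have hbound : ∀ x, |ρ x * (f x - c)| ≤ ρ x * B := fun x => by
    rcases eq_or_ne (ρ x) 0 with h0 | h0
    · simp [h0]
    · rw [abs_mul, abs_of_nonneg (hρ0 x)]
      exact mul_le_mul_of_nonneg_left (hfB x h0) (hρ0 x)
  have hint : Integrable (fun x => ρ x * (f x - c)) μ :=
    (hρ.mul_const B).mono' (hρ.aestronglyMeasurable.mul (hf.sub aestronglyMeasurable_const))
      (ae_of_all _ hbound)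
  have hsplit : ∫ x, ρ x * f x ∂μ - c = ∫ x, ρ x * (f x - c) ∂μ := by
    have hρf : Integrable (fun x => ρ x * f x) μ :=
      (hint.add (hρ.mul_const c)).congr (ae_of_all _ fun x => by simp only [Pi.add_apply]; ring)
    simp_rw [mul_sub]
    rw [integral_sub hρf (hρ.mul_const c), integral_mul_const, hρ1, one_mul]
  calc |∫ x, ρ x * f x ∂μ - c| = |∫ x, ρ x * (f x - c) ∂μ| := by rw [hsplit]
    _ ≤ ∫ x, ρ x * B ∂μ := abs_integral_le_integral_abs.trans
        (integral_mono hint.abs (hρ.mul_const B) hbound)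
    _ = B := by rw [integral_mul_const, hρ1, one_mul]

section Kernels

variable {φ : EuclideanSpace ℝ (Fin 2) → ℝ} {h : ℝ → ℝ} {δ : ℝ}

theorem integral_Phid_sq (hφ_int : ∫ x, φ x ^ 2 = 1) (hδ : δ ≠ 0)
    (y' : EuclideanSpace ℝ (Fin 2)) : ∫ x', Phid φ δ x' y' ^ 2 = 1 := by
  simp_rw [Phid, mul_pow]
  rw [integral_const_mul, integral_sub_right_eq_self (fun u => φ (δ⁻¹ • u) ^ 2) y',
    Measure.integral_comp_inv_smul volume (fun v => φ v ^ 2) δ, hφ_int,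
    finrank_euclideanSpace_fin, smul_eq_mul, mul_one, abs_of_nonneg (sq_nonneg δ)]
  field_simp

theorem dist_le_of_Phid_ne_zero (hφ_supp : Function.support φ ⊆ closedBall 0 1) (hδ : 0 < δ)
    {x' y' : EuclideanSpace ℝ (Fin 2)} (hx : Phid φ δ x' y' ≠ 0) : dist x' y' ≤ δ := by
  have := hφ_supp (Function.mem_support.2 (right_ne_zero_of_mul hx))
  rwa [mem_closedBall_zero_iff, norm_smul, norm_inv, Real.norm_eq_abs, abs_of_pos hδ,
    ← dist_eq_norm, inv_mul_le_iff₀ hδ, mul_one] at this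

theorem integral_hdel_sq (hh_int : ∫ x, h x ^ 2 = 1) (hδ : 0 < δ) (y3 : ℝ) :
    ∫ x3, hdel h δ x3 y3 ^ 2 = 1 := by
  have hsq : (δ ^ (-(1 / 2) : ℝ)) ^ 2 = δ⁻¹ := by
    rw [← Real.rpow_natCast, ← Real.rpow_mul hδ.le, ← Real.rpow_neg_one]
    norm_num
  simp_rw [hdel, mul_pow, hsq]
  rw [integral_const_mul, integral_sub_right_eq_self (fun u => h (u / δ) ^ 2) y3,
    Measure.integral_comp_div (fun v => h v ^ 2) δ, hh_int, smul_eq_mul, mul_one,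
    abs_of_pos hδ, inv_mul_cancel₀ hδ.ne']

theorem abs_sub_le_of_hdel_ne_zero (hh_supp : Function.support h ⊆ Icc (-1) 1) (hδ : 0 < δ)
    {x3 y3 : ℝ} (hx : hdel h δ x3 y3 ≠ 0) : |x3 - y3| ≤ δ := by
  have := hh_supp (Function.mem_support.2 (right_ne_zero_of_mul hx))
  rwa [mem_Icc, ← abs_le, abs_div, abs_of_pos hδ, div_le_one hδ] at this

end Kernels

theorem abs_Rdel_sub_le {φ : EuclideanSpace ℝ (Fin 2) → ℝ} {h : ℝ → ℝ}
    {q : EuclideanSpace ℝ (Fin 2) → ℝ → ℝ} {δ B y3 : ℝ} {y' : EuclideanSpace ℝ (Fin 2)}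
    (hφ_supp : Function.support φ ⊆ closedBall 0 1) (hφ_int : ∫ x, φ x ^ 2 = 1)
    (hh_supp : Function.support h ⊆ Icc (-1) 1) (hh_int : ∫ x, h x ^ 2 = 1) (hδ : 0 < δ)
    (hq : Measurable (Function.uncurry q))
    (hqB : ∀ x' x3, dist x' y' ≤ δ → |x3 - y3| ≤ δ → |q x' x3 - q y' y3| ≤ B) :
    |Rdel φ h q δ y' y3 - q y' y3| ≤ B := by
  set P := fun x' => Phid φ δ x' y' ^ 2
  set H := fun x3 => hdel h δ x3 y3 ^ 2
  have hP1 : ∫ x', P x' = 1 := integral_Phid_sq hφ_int hδ.ne' y'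
  have hP : Integrable P := .of_integral_ne_zero (by simp [hP1])
  have hJ : AEStronglyMeasurable (fun x3 => ∫ x', P x' * q x' x3) :=
    AEStronglyMeasurable.integral_prod_right' (μ := volume) (ν := volume)
      (f := fun p : ℝ × EuclideanSpace ℝ (Fin 2) => P p.2 * q p.2 p.1)
      (hP.aestronglyMeasurable.comp_snd.mul (hq.comp measurable_swap).aestronglyMeasurable)
  have hRdel : Rdel φ h q δ y' y3 = ∫ x3, H x3 * ∫ x', P x' * q x' x3 := by
    refine integral_congr_ae (ae_of_all _ fun x3 => ?_)
    dsimp only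
    rw [← integral_const_mul]
    exact integral_congr_ae (ae_of_all _ fun _ => by simp only [P, H]; ring)
  rw [hRdel]
  refine abs_integral_mul_sub_le (fun _ => sq_nonneg _) (integral_hdel_sq hh_int hδ y3) hJ
    fun x3 hx3 => abs_integral_mul_sub_le (fun _ => sq_nonneg _) hP1
      hq.of_uncurry_right.aestronglyMeasurable fun x' hx' => hqB x' x3 ?_ ?_
  · exact dist_le_of_Phid_ne_zero hφ_supp hδ ((pow_ne_zero_iff two_ne_zero).1 hx')
  · exact abs_sub_le_of_hdel_ne_zero hh_supp hδ ((pow_ne_zero_iff two_ne_zero).1 hx3)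

theorem rpow_sqrt_sq_add_sq_le {a b δ α : ℝ} (ha : 0 ≤ a) (hb : 0 ≤ b) (haδ : a ≤ δ)
    (hbδ : b ≤ δ) (hα0 : 0 ≤ α) (hα1 : α ≤ 1) : √(a ^ 2 + b ^ 2) ^ α ≤ 2 * δ ^ α := by
  have hδ : 0 ≤ δ := ha.trans haδ
  calc √(a ^ 2 + b ^ 2) ^ α ≤ (2 * δ) ^ α :=
        Real.rpow_le_rpow (Real.sqrt_nonneg _)
          (Real.sqrt_le_iff.2 ⟨by positivity, by nlinarith⟩) hα0
    _ = 2 ^ α * δ ^ α := Real.mul_rpow zero_le_two hδ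
    _ ≤ 2 * δ ^ α := by
        gcongr
        simpa using Real.rpow_le_rpow_of_exponent_le one_le_two hα1

section Estimate

variable {ω : Set (EuclideanSpace ℝ (Fin 2))} {φ : EuclideanSpace ℝ (Fin 2) → ℝ} {h : ℝ → ℝ}
  {q : EuclideanSpace ℝ (Fin 2) → ℝ → ℝ} {M α δ y3 : ℝ}

theorem sq_Rdel_sub_le_indicator {y' : EuclideanSpace ℝ (Fin 2)}
    (hφ_supp : Function.support φ ⊆ closedBall 0 1) (hφ_int : ∫ x, φ x ^ 2 = 1)
    (hh_supp : Function.support h ⊆ Icc (-1) 1) (hh_int : ∫ x, h x ^ 2 = 1)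
    (hα0 : 0 ≤ α) (hα1 : α ≤ 1) (hδ : 0 < δ) (hq : Measurable (Function.uncurry q))
    (hqb : ∀ x' x3, |q x' x3| ≤ 2 * M)
    (hq_hold : ∀ x' ∈ closure ω, ∀ y' ∈ closure ω, ∀ x3 y3 : ℝ,
      |q x' x3 - q y' y3| ≤ 2 * M * √(dist x' y' ^ 2 + dist x3 y3 ^ 2) ^ α)
    (hq_zero : ∀ x' ∉ closure ω, ∀ x3, q x' x3 = 0) :
    (Rdel φ h q δ y' y3 - q y' y3) ^ 2 ≤
      {x | infDist x (frontier ω) ≤ δ}.indicator (fun _ => (4 * M) ^ 2) y' +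
        (closure ω).indicator (fun _ => (4 * M * δ ^ α) ^ 2) y' := by
  have hM : 0 ≤ M := by linarith [abs_nonneg (q y' y3), hqb y' y3]
  have hosc : ∀ B, (∀ x' x3, dist x' y' ≤ δ → |x3 - y3| ≤ δ → |q x' x3 - q y' y3| ≤ B) →
      (Rdel φ h q δ y' y3 - q y' y3) ^ 2 ≤ B ^ 2 := fun B hB =>
    (sq_abs _).symm.trans_le <| pow_le_pow_left₀ (abs_nonneg _)
      (abs_Rdel_sub_le hφ_supp hφ_int hh_supp hh_int hδ hq hB) 2
  have hI₁ := indicator_nonneg (s := {x | infDist x (frontier ω) ≤ δ})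
    (fun _ _ => sq_nonneg (4 * M)) y'
  have hI₂ := indicator_nonneg (s := closure ω) (fun _ _ => sq_nonneg (4 * M * δ ^ α)) y'
  by_cases hnear : infDist y' (frontier ω) ≤ δ
  · rw [indicator_of_mem (s := {x | infDist x (frontier ω) ≤ δ}) hnear]
    refine (hosc _ fun x' x3 _ _ => ?_).trans (le_add_of_nonneg_right hI₂)
    linarith [abs_sub (q x' x3) (q y' y3), hqb x' x3, hqb y' y3]
  have hd : Disjoint (closedBall y' δ) (frontier ω) :=
    disjoint_closedBall_of_lt_infDist (not_le.1 hnear)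
  have hy'_ball : y' ∈ closedBall y' δ := mem_closedBall_self hδ.le
  by_cases hy' : y' ∈ closure ω
  · have hball : closedBall y' δ ⊆ closure ω :=
      (convex_closedBall y' δ).isPreconnected.subset_of_disjoint_frontier ⟨y', hy'_ball, hy'⟩
        (hd.mono_right frontier_closure_subset)
    rw [indicator_of_mem hy']
    refine (hosc _ fun x' x3 hx' hx3 => ?_).trans (le_add_of_nonneg_left hI₁)
    calc |q x' x3 - q y' y3| ≤ 2 * M * √(dist x' y' ^ 2 + dist x3 y3 ^ 2) ^ α :=
          hq_hold x' (hball hx') y' hy' x3 y3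
      _ ≤ 2 * M * (2 * δ ^ α) := by
          gcongr
          exact rpow_sqrt_sq_add_sq_le dist_nonneg dist_nonneg hx'
            (by rwa [Real.dist_eq]) hα0 hα1
      _ = 4 * M * δ ^ α := by ring
  · have hball : closedBall y' δ ⊆ (closure ω)ᶜ :=
      (convex_closedBall y' δ).isPreconnected.subset_of_disjoint_frontier ⟨y', hy'_ball, hy'⟩
        (by rw [frontier_compl]; exact hd.mono_right frontier_closure_subset)
    refine (hosc 0 fun x' x3 hx' _ => ?_).trans
      ((zero_pow two_ne_zero).trans_le (add_nonneg hI₁ hI₂))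
    rw [hq_zero x' (hball hx'), hq_zero y' hy', sub_zero, abs_zero]

theorem integral_sq_Rdel_sub_le (hω_bdd : Bornology.IsBounded ω)
    (hφ_supp : Function.support φ ⊆ closedBall 0 1) (hφ_int : ∫ x, φ x ^ 2 = 1)
    (hh_supp : Function.support h ⊆ Icc (-1) 1) (hh_int : ∫ x, h x ^ 2 = 1)
    (hα0 : 0 ≤ α) (hα1 : α ≤ 1) (hδ : 0 < δ) (hq : Measurable (Function.uncurry q))
    (hqb : ∀ x' x3, |q x' x3| ≤ 2 * M)
    (hq_hold : ∀ x' ∈ closure ω, ∀ y' ∈ closure ω, ∀ x3 y3 : ℝ,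
      |q x' x3 - q y' y3| ≤ 2 * M * √(dist x' y' ^ 2 + dist x3 y3 ^ 2) ^ α)
    (hq_zero : ∀ x' ∉ closure ω, ∀ x3, q x' x3 = 0) {s : ℝ} (hs : 0 ≤ s)
    (hnear : volume {x | infDist x (frontier ω) ≤ δ} ≤ ENNReal.ofReal s) :
    ∫ y', (Rdel φ h q δ y' y3 - q y' y3) ^ 2 ≤
      (4 * M) ^ 2 * (s + volume.real (closure ω) * (δ ^ α) ^ 2) := by
  set S := {x | infDist x (frontier ω) ≤ δ}
  have hS : MeasurableSet S :=
    (isClosed_le (continuous_infDist_pt _) continuous_const).measurableSet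
  have hC : MeasurableSet (closure ω) := isClosed_closure.measurableSet
  have hI₁ : Integrable (S.indicator fun _ => (4 * M) ^ 2) :=
    (integrableOn_const (hnear.trans_lt ENNReal.ofReal_lt_top).ne).integrable_indicator hS
  have hI₂ : Integrable ((closure ω).indicator fun _ => (4 * M * δ ^ α) ^ 2) :=
    (integrableOn_const hω_bdd.isCompact_closure.measure_lt_top.ne).integrable_indicator hC
  calc ∫ y', (Rdel φ h q δ y' y3 - q y' y3) ^ 2
      ≤ ∫ y', (S.indicator (fun _ => (4 * M) ^ 2) y' +
          (closure ω).indicator (fun _ => (4 * M * δ ^ α) ^ 2) y') :=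
        integral_mono_of_nonneg (ae_of_all _ fun _ => sq_nonneg _) (hI₁.add hI₂)
          (ae_of_all _ fun _ => sq_Rdel_sub_le_indicator hφ_supp hφ_int hh_supp hh_int
            hα0 hα1 hδ hq hqb hq_hold hq_zero)
    _ = volume.real S * (4 * M) ^ 2 + volume.real (closure ω) * (4 * M * δ ^ α) ^ 2 := by
        rw [integral_add hI₁ hI₂, integral_indicator_const _ hS, integral_indicator_const _ hC,
          smul_eq_mul, smul_eq_mul]
    _ = (4 * M) ^ 2 * (volume.real S + volume.real (closure ω) * (δ ^ α) ^ 2) := by ring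
    _ ≤ _ := by
        gcongr
        exact ENNReal.toReal_le_of_le_ofReal hs hnear

end Estimate

theorem stmt_0_general
    (ω : Set (EuclideanSpace ℝ (Fin 2)))
    (hω_bdd : Bornology.IsBounded ω)
    (M α : ℝ) (hM : 0 < M) (hα0 : 0 < α) (hα1 : α < 1)
    (φ : EuclideanSpace ℝ (Fin 2) → ℝ)
    (hφ_supp : Function.support φ ⊆ Metric.closedBall 0 1)
    (hφ_int : ∫ x : EuclideanSpace ℝ (Fin 2), (φ x) ^ 2 = 1)
    (h : ℝ → ℝ)
    (hh_supp : Function.support h ⊆ Set.Icc (-1 : ℝ) 1)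
    (hh_int : ∫ x : ℝ, (h x) ^ 2 = 1)
    (qt : EuclideanSpace ℝ (Fin 2) → ℝ → ℝ)
    (hqt_cont : Continuous (fun p : EuclideanSpace ℝ (Fin 2) × ℝ => qt p.1 p.2))
    (hqt_bdd : ∀ x' ∈ closure ω, ∀ x3 : ℝ, |qt x' x3| ≤ 2 * M)
    (hqt_hold : ∀ x' ∈ closure ω, ∀ y' ∈ closure ω, ∀ x3 y3 : ℝ,
      |qt x' x3 - qt y' y3| ≤
        2 * M * (Real.sqrt (dist x' y' ^ 2 + dist x3 y3 ^ 2)) ^ α)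
    (q : EuclideanSpace ℝ (Fin 2) → ℝ → ℝ)
    (hq_eq : ∀ x' ∈ closure ω, ∀ x3 : ℝ, q x' x3 = qt x' x3)
    (hq_zero : ∀ x' ∉ closure ω, ∀ x3 : ℝ, q x' x3 = 0)
    (Cω : ℝ) (hCω : 0 < Cω)
    (hfrontier : ∀ s ∈ Set.Ioc (0 : ℝ) 1,
      volume {x' : EuclideanSpace ℝ (Fin 2) | infDist x' (frontier ω) ≤ s}
        ≤ ENNReal.ofReal (Cω * s)) :
    ∃ C > 0, ∀ δ ∈ Set.Ioo (0 : ℝ) 1, ∀ y3 : ℝ,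
      Real.sqrt (∫ y' : EuclideanSpace ℝ (Fin 2),
          (Rdel φ h q δ y' y3 - q y' y3) ^ 2)
        ≤ C * δ ^ (min α (1 / 2)) := by
  have hqb : ∀ x' x3, |q x' x3| ≤ 2 * M := fun x' x3 => by
    by_cases hx : x' ∈ closure ω
    · rw [hq_eq x' hx]; exact hqt_bdd x' hx x3
    · rw [hq_zero x' hx, abs_zero]; positivity
  have hq_hold : ∀ x' ∈ closure ω, ∀ y' ∈ closure ω, ∀ x3 y3 : ℝ,
      |q x' x3 - q y' y3| ≤ 2 * M * √(dist x' y' ^ 2 + dist x3 y3 ^ 2) ^ α :=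
    fun x' hx' y' hy' x3 y3 => by
      rw [hq_eq x' hx', hq_eq y' hy']; exact hqt_hold x' hx' y' hy' x3 y3
  have hq : Measurable (Function.uncurry q) := by
    have : Function.uncurry q = (closure ω ×ˢ univ).indicator (Function.uncurry qt) := by
      ext ⟨x', x3⟩
      by_cases hx : x' ∈ closure ω <;> simp [hx, hq_eq, hq_zero]
    rw [this]
    exact hqt_cont.measurable.indicator (isClosed_closure.measurableSet.prod .univ)
  have hV : 0 ≤ volume.real (closure ω) := measureReal_nonneg
  refine ⟨4 * M * √(Cω + volume.real (closure ω)), by positivity,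
    fun δ ⟨hδ0, hδ1⟩ y3 => Real.sqrt_le_iff.2 ⟨by positivity, ?_⟩⟩
  set m := min α (1 / 2)
  have hδm : δ ≤ (δ ^ m) ^ 2 :=
    calc δ = (δ ^ (1 / 2 : ℝ)) ^ 2 := by rw [← Real.sqrt_eq_rpow, Real.sq_sqrt hδ0.le]
      _ ≤ (δ ^ m) ^ 2 := pow_le_pow_left₀ (by positivity)
          (Real.rpow_le_rpow_of_exponent_ge hδ0 hδ1.le (min_le_right _ _)) 2
  have hαm : δ ^ α ≤ δ ^ m := Real.rpow_le_rpow_of_exponent_ge hδ0 hδ1.le (min_le_left _ _)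
  refine (integral_sq_Rdel_sub_le hω_bdd hφ_supp hφ_int hh_supp hh_int hα0.le hα1.le hδ0 hq
    hqb hq_hold hq_zero (by positivity) (hfrontier δ ⟨hδ0, hδ1.le⟩)).trans ?_
  rw [mul_pow _ (δ ^ m), mul_pow (4 * M), Real.sq_sqrt (by positivity), mul_assoc, add_mul]
  gcongr

theorem stmt_0
    (ω : Set (EuclideanSpace ℝ (Fin 2))) (hω_open : IsOpen ω)
    (hω_bdd : Bornology.IsBounded ω)
    (M α : ℝ) (hM : 0 < M) (hα0 : 0 < α) (hα1 : α < 1)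
    (φ : EuclideanSpace ℝ (Fin 2) → ℝ) (hφ_smooth : ContDiff ℝ (⊤ : ℕ∞) φ)
    (hφ_supp : Function.support φ ⊆ Metric.closedBall 0 1)
    (hφ_int : ∫ x : EuclideanSpace ℝ (Fin 2), (φ x) ^ 2 = 1)
    (h : ℝ → ℝ) (hh_smooth : ContDiff ℝ (⊤ : ℕ∞) h)
    (hh_supp : Function.support h ⊆ Set.Icc (-1 : ℝ) 1)
    (hh_int : ∫ x : ℝ, (h x) ^ 2 = 1)
    (qt : EuclideanSpace ℝ (Fin 2) → ℝ → ℝ)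
    (hqt_cont : Continuous (fun p : EuclideanSpace ℝ (Fin 2) × ℝ => qt p.1 p.2))
    (hqt_bdd : ∀ x' ∈ closure ω, ∀ x3 : ℝ, |qt x' x3| ≤ 2 * M)
    (hqt_hold : ∀ x' ∈ closure ω, ∀ y' ∈ closure ω, ∀ x3 y3 : ℝ,
      |qt x' x3 - qt y' y3| ≤
        2 * M * (Real.sqrt (dist x' y' ^ 2 + dist x3 y3 ^ 2)) ^ α)
    (q : EuclideanSpace ℝ (Fin 2) → ℝ → ℝ)
    (hq_eq : ∀ x' ∈ closure ω, ∀ x3 : ℝ, q x' x3 = qt x' x3)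
    (hq_zero : ∀ x' ∉ closure ω, ∀ x3 : ℝ, q x' x3 = 0)
    (Cω : ℝ) (hCω : 0 < Cω)
    (hfrontier : ∀ s ∈ Set.Ioc (0 : ℝ) 1,
      volume {x' : EuclideanSpace ℝ (Fin 2) | infDist x' (frontier ω) ≤ s}
        ≤ ENNReal.ofReal (Cω * s)) :
    ∃ C > 0, ∀ δ ∈ Set.Ioo (0 : ℝ) 1, ∀ y3 : ℝ,
      Real.sqrt (∫ y' : EuclideanSpace ℝ (Fin 2),
          (Rdel φ h q δ y' y3 - q y' y3) ^ 2)
        ≤ C * δ ^ (min α (1 / 2)) :=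
  stmt_0_general ω hω_bdd M α hM hα0 hα1 φ hφ_supp hφ_int h hh_supp hh_int qt hqt_cont hqt_bdd
    hqt_hold q hq_eq hq_zero Cω hCω hfrontier
end

section
/- Let 0 < α < 1 and H > 0. There exists a constant C > 0 depending only on α such that the following holds: if f : ℝ² → ℝ is continuous, square-integrable on ℝ², and satisfies |f(x) − f(y)| ≤ H·‖x − y‖^α for all x, y ∈ ℝ², then for every x ∈ ℝ² one has |f(x)| ≤ C·H^{1/(α+1)}·(∫_{ℝ²} f² )^{α/(2(α+1))}; equivalently, sup_{x∈ℝ²}|f(x)| ≤ C·H^{1−μ}·‖f‖_{L²(ℝ²)}^{μ} with μ = 2α/(2α+2). -/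
open MeasureTheory Metric Set

/-!
If `|f x| = M > 0`, the Hölder bound keeps `|f| ≥ M / 2` on the ball around `x` of radius
`r = (M / (2 H)) ^ (1 / α)`, so `∫ f² ≥ (M / 2)² · vol(ball x r) ≍ M² · (M / H) ^ (d / α)`.
Solving for `M` gives `M ≲ H ^ (d / (2α + d)) · (∫ f²) ^ (α / (2α + d))`; in the plane `d = 2`.
-/

theorem measureReal_ball_pos {X : Type*} [PseudoMetricSpace X] [ProperSpace X]
    [MeasurableSpace X] (μ : Measure X) [μ.IsOpenPosMeasure] [IsFiniteMeasureOnCompacts μ]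
    (x : X) {r : ℝ} (hr : 0 < r) : 0 < μ.real (ball x r) :=
  ENNReal.toReal_pos (measure_ball_pos μ x hr).ne' measure_ball_lt_top.ne

theorem half_abs_le_abs_of_holder {E : Type*} [SeminormedAddCommGroup E] {f : E → ℝ} {H α : ℝ}
    (hf : ∀ x y, |f x - f y| ≤ H * ‖x - y‖ ^ α) (hH : 0 ≤ H)
    (hα : 0 ≤ α) {x : E} {r : ℝ} (hr : H * r ^ α ≤ |f x| / 2) {y : E} (hy : y ∈ ball x r) :
    |f x| / 2 ≤ |f y| := by
  have hxy : ‖x - y‖ ^ α ≤ r ^ α :=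
    Real.rpow_le_rpow (norm_nonneg _) (by simpa [dist_eq_norm] using (mem_ball'.1 hy).le) hα
  have hdiff : |f x - f y| ≤ |f x| / 2 :=
    (hf x y).trans ((mul_le_mul_of_nonneg_left hxy hH).trans hr)
  linarith [abs_sub_abs_le_abs_sub (f x) (f y)]

section HolderBound

variable {E : Type*} [NormedAddCommGroup E] [NormedSpace ℝ E] [FiniteDimensional ℝ E]
  [MeasurableSpace E] [BorelSpace E] (μ : Measure E) [μ.IsAddHaarMeasure]
  {f : E → ℝ} {H α : ℝ}

theorem sq_mul_measureReal_ball_le_integral_sq (hf : ∀ x y, |f x - f y| ≤ H * ‖x - y‖ ^ α)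
    (hf2 : Integrable (fun y => f y ^ 2) μ) (hH : 0 ≤ H) (hα : 0 ≤ α) {x : E} {r : ℝ}
    (hr0 : 0 < r) (hr : H * r ^ α ≤ |f x| / 2) :
    (|f x| / 2) ^ 2 * (r ^ Module.finrank ℝ E * μ.real (ball 0 1)) ≤ ∫ y, f y ^ 2 ∂μ := by
  have hball : ∀ y ∈ ball x r, (|f x| / 2) ^ 2 ≤ f y ^ 2 := fun y hy => by
    rw [← sq_abs (f y)]
    exact pow_le_pow_left₀ (by positivity) (half_abs_le_abs_of_holder hf hH hα hr hy) 2
  have hvol : μ.real (ball x r) = r ^ Module.finrank ℝ E * μ.real (ball 0 1) := by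
    rw [measureReal_def, Measure.addHaar_ball_of_pos μ x hr0, ENNReal.toReal_mul,
      ENNReal.toReal_ofReal (by positivity), measureReal_def]
  calc (|f x| / 2) ^ 2 * (r ^ Module.finrank ℝ E * μ.real (ball 0 1))
      = (|f x| / 2) ^ 2 * μ.real (ball x r) := by rw [hvol]
    _ ≤ ∫ y in ball x r, f y ^ 2 ∂μ :=
      setIntegral_ge_of_const_le_real measurableSet_ball measure_ball_lt_top.ne hball
        hf2.integrableOn
    _ ≤ ∫ y, f y ^ 2 ∂μ := setIntegral_le_integral hf2 (.of_forall fun y => sq_nonneg _)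

theorem abs_rpow_le_of_holder (hf : ∀ x y, |f x - f y| ≤ H * ‖x - y‖ ^ α)
    (hf2 : Integrable (fun y => f y ^ 2) μ) (hH : 0 < H) (hα : 0 < α) (x : E) :
    |f x| ^ (2 + (Module.finrank ℝ E : ℝ) / α) ≤
      4 * 2 ^ ((Module.finrank ℝ E : ℝ) / α) / μ.real (ball 0 1) *
        H ^ ((Module.finrank ℝ E : ℝ) / α) * ∫ y, f y ^ 2 ∂μ := by
  set d : ℝ := (Module.finrank ℝ E : ℝ)
  set V := μ.real (ball (0 : E) 1)
  have hV : 0 < V := measureReal_ball_pos μ 0 one_pos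
  have hI : 0 ≤ ∫ y, f y ^ 2 ∂μ := integral_nonneg fun y => sq_nonneg _
  rcases (abs_nonneg (f x)).eq_or_lt with hM | hM
  · rw [← hM, Real.zero_rpow (by positivity)]
    positivity
  set M := |f x|
  have hMH : 0 < M / (2 * H) := by positivity
  set r := (M / (2 * H)) ^ (1 / α)
  have hr : H * r ^ α = M / 2 := by
    rw [← Real.rpow_mul hMH.le, one_div_mul_cancel hα.ne', Real.rpow_one]
    field_simp
  have hrd : r ^ Module.finrank ℝ E = M ^ (d / α) / (2 ^ (d / α) * H ^ (d / α)) := by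
    rw [← Real.rpow_natCast, ← Real.rpow_mul hMH.le, Real.div_rpow hM.le (by positivity),
      Real.mul_rpow zero_le_two hH.le, one_div_mul_eq_div]
  have hball := sq_mul_measureReal_ball_le_integral_sq μ hf hf2 hH.le hα.le
    (Real.rpow_pos_of_pos hMH _) hr.le
  rw [hrd] at hball
  rw [Real.rpow_add hM, Real.rpow_two]
  calc M ^ 2 * M ^ (d / α)
      = 4 * 2 ^ (d / α) / V * H ^ (d / α) *
          ((M / 2) ^ 2 * (M ^ (d / α) / (2 ^ (d / α) * H ^ (d / α)) * V)) := by
        field_simp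
        ring
    _ ≤ 4 * 2 ^ (d / α) / V * H ^ (d / α) * ∫ y, f y ^ 2 ∂μ := by gcongr

theorem abs_le_of_holder (hf : ∀ x y, |f x - f y| ≤ H * ‖x - y‖ ^ α)
    (hf2 : Integrable (fun y => f y ^ 2) μ) (hH : 0 < H) (hα : 0 < α) (x : E) :
    |f x| ≤ (4 * 2 ^ ((Module.finrank ℝ E : ℝ) / α) / μ.real (ball 0 1)) ^
        (α / (2 * α + Module.finrank ℝ E)) *
      H ^ ((Module.finrank ℝ E : ℝ) / (2 * α + Module.finrank ℝ E)) *
      (∫ y, f y ^ 2 ∂μ) ^ (α / (2 * α + Module.finrank ℝ E)) := by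
  set d : ℝ := (Module.finrank ℝ E : ℝ)
  have hd : 0 ≤ d := Nat.cast_nonneg _
  have hV := measureReal_ball_pos μ 0 one_pos
  have hI : 0 ≤ ∫ y, f y ^ 2 ∂μ := integral_nonneg fun y => sq_nonneg _
  set e := α / (2 * α + d) with he
  have hpe : (2 + d / α) * e = 1 := by rw [he]; field_simp
  have hHe : d / α * e = d / (2 * α + d) := by rw [he]; field_simp
  calc |f x| = (|f x| ^ (2 + d / α)) ^ e := by
        rw [← Real.rpow_mul (abs_nonneg _), hpe, Real.rpow_one]
    _ ≤ (4 * 2 ^ (d / α) / μ.real (ball 0 1) * H ^ (d / α) * ∫ y, f y ^ 2 ∂μ) ^ e :=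
        Real.rpow_le_rpow (by positivity) (abs_rpow_le_of_holder μ hf hf2 hH hα x) (by positivity)
    _ = _ := by
        rw [Real.mul_rpow (by positivity) hI, Real.mul_rpow (by positivity) (by positivity),
          ← Real.rpow_mul hH.le, hHe]

end HolderBound

theorem stmt_7_general (α : ℝ) (hα0 : 0 < α) :
    ∃ C > 0, ∀ H > (0 : ℝ), ∀ f : EuclideanSpace ℝ (Fin 2) → ℝ,
      Continuous f →
      Integrable (fun x => f x ^ 2) →
      (∀ x y : EuclideanSpace ℝ (Fin 2), |f x - f y| ≤ H * ‖x - y‖ ^ α) →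
      ∀ x : EuclideanSpace ℝ (Fin 2),
        |f x| ≤ C * H ^ ((1 : ℝ) / (α + 1)) *
          (∫ y : EuclideanSpace ℝ (Fin 2), f y ^ 2) ^ (α / (2 * (α + 1))) := by
  have hV := measureReal_ball_pos (volume : Measure (EuclideanSpace ℝ (Fin 2))) 0 one_pos
  refine ⟨(4 * 2 ^ (2 / α) / volume.real (ball (0 : EuclideanSpace ℝ (Fin 2)) 1)) ^
    (α / (2 * (α + 1))), by positivity, fun H hH f _ hf2 hf x => ?_⟩
  have hexp : α / (2 * α + 2) = α / (2 * (α + 1)) := by ring_nf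
  have hHexp : (2 : ℝ) / (2 * α + 2) = 1 / (α + 1) := by field_simp
  simpa [finrank_euclideanSpace_fin, hexp, hHexp] using abs_le_of_holder volume hf hf2 hH hα0 x

theorem stmt_7 (α : ℝ) (hα0 : 0 < α) (hα1 : α < 1) :
    ∃ C > 0, ∀ H > (0 : ℝ), ∀ f : EuclideanSpace ℝ (Fin 2) → ℝ,
      Continuous f →
      Integrable (fun x => f x ^ 2) →
      (∀ x y : EuclideanSpace ℝ (Fin 2), |f x - f y| ≤ H * ‖x - y‖ ^ α) →
      ∀ x : EuclideanSpace ℝ (Fin 2),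
        |f x| ≤ C * H ^ ((1 : ℝ) / (α + 1)) *
          (∫ y : EuclideanSpace ℝ (Fin 2), f y ^ 2) ^ (α / (2 * (α + 1))) :=
  stmt_7_general α hα0
end
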